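/- arXiv:1907.08192 — 2 statements merged into one kernel-verified Lean document; each statement's English description precedes it below -/
import Mathlib

section
/- Work in ℝ⁴ with the Minkowski form η = diag(−1,1,1,1). Let F be antisymmetric, set v = e₀, and define the stress tensor T^{μν} = 2 F^{μα} F^ν{}_α − (1/2) η^{μν} F_{αβ} F^{αβ} (indices raised/lowered with η). Then v_μ T^{μν} v_ν = |E|² + |B|², and for every τ ∈ ℝ⁴ with η(τ,τ) < 0 and η(τ, v) < 0, one has v_μ T^{μν} τ_ν ≥ ((−η(τ,v)) − |τ⃗|) (|E|² + |B|²) = (1/2)((−η(τ,v)) − |τ⃗|) |F|_m², where E_i = F_{i0}, B_i = (1/2)ε_{ijk}F_{jk}, τ⃗ = (τ¹,τ²,τ³), and |F|_m² = Σ(F_{μν})². -/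
open Matrix

/-!
In the rest frame of `e₀` the energy density of `F` is `|E|² + |B|²` and its momentum density is
the Poynting vector `E × B`, so the flux through a covector `τ` is `τ⁰ (|E|² + |B|²) - 2 τ⃗ · (E × B)`.
By Cauchy–Schwarz and Lagrange's identity, `2 |E × B| ≤ 2 |E| |B| ≤ |E|² + |B|²`, so the Poynting term
costs at most `|τ⃗| (|E|² + |B|²)`.
-/

lemma dotProduct_self_fin_three (u : Fin 3 → ℝ) : u ⬝ᵥ u = u 0 ^ 2 + u 1 ^ 2 + u 2 ^ 2 := by
  simp only [dotProduct, Fin.sum_univ_three, sq]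

lemma dotProduct_le_sqrt_mul_sqrt {ι : Type*} [Fintype ι] (u w : ι → ℝ) :
    u ⬝ᵥ w ≤ √(u ⬝ᵥ u) * √(w ⬝ᵥ w) := by
  simpa only [dotProduct, sq] using Real.sum_mul_le_sqrt_mul_sqrt Finset.univ u w

lemma two_mul_sqrt_cross_dotProduct_cross_le (E B : Fin 3 → ℝ) :
    2 * √(E ⨯₃ B ⬝ᵥ E ⨯₃ B) ≤ E ⬝ᵥ E + B ⬝ᵥ B := by
  have hE : 0 ≤ E ⬝ᵥ E := dotProduct_self_star_nonneg E
  have hB : 0 ≤ B ⬝ᵥ B := dotProduct_self_star_nonneg B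
  rw [← Real.sqrt_sq zero_le_two, ← Real.sqrt_mul (sq_nonneg 2), Real.sqrt_le_left (by positivity),
    cross_dot_cross, dotProduct_comm B E]
  nlinarith [sq_nonneg (E ⬝ᵥ E - B ⬝ᵥ B), sq_nonneg (E ⬝ᵥ B)]

lemma two_mul_dotProduct_cross_le (t E B : Fin 3 → ℝ) :
    2 * (t ⬝ᵥ E ⨯₃ B) ≤ √(t ⬝ᵥ t) * (E ⬝ᵥ E + B ⬝ᵥ B) :=
  calc 2 * (t ⬝ᵥ E ⨯₃ B) ≤ √(t ⬝ᵥ t) * (2 * √(E ⨯₃ B ⬝ᵥ E ⨯₃ B)) := by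
        nlinarith [dotProduct_le_sqrt_mul_sqrt t (E ⨯₃ B)]
    _ ≤ √(t ⬝ᵥ t) * (E ⬝ᵥ E + B ⬝ᵥ B) :=
        mul_le_mul_of_nonneg_left (two_mul_sqrt_cross_dotProduct_cross_le E B) (Real.sqrt_nonneg _)

/-- The antisymmetric tensor `F_{μν}` with `E_i = F_{i0}` and `B_i = ½ ε_{ijk} F_{jk}`. -/
def fieldStrength (E B : Fin 3 → ℝ) : Matrix (Fin 4) (Fin 4) ℝ :=
  !![0, -E 0, -E 1, -E 2;
     E 0, 0, B 2, -B 1;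
     E 1, -B 2, 0, B 0;
     E 2, B 1, -B 0, 0]

lemma eq_fieldStrength_of_transpose_eq_neg {F : Matrix (Fin 4) (Fin 4) ℝ} (hF : Fᵀ = -F) :
    F = fieldStrength ![F 1 0, F 2 0, F 3 0] ![F 2 3, F 3 1, F 1 2] := by
  have h : ∀ i j, F i j = -F j i := fun i j => by simpa using congrFun (congrFun hF j) i
  ext i j
  fin_cases i <;> fin_cases j <;>
    simp only [Fin.isValue, Fin.zero_eta, Fin.mk_one, Fin.reduceFinMk, fieldStrength, of_apply,
      cons_val', cons_val_zero, cons_val_one, cons_val, cons_val_fin_one] <;>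
    linarith [h 0 0, h 1 1, h 2 2, h 3 3, h 0 1, h 0 2, h 0 3, h 1 2, h 1 3, h 2 3]

lemma sum_sum_fieldStrength_sq (E B : Fin 3 → ℝ) :
    ∑ μ, ∑ ν, fieldStrength E B μ ν * fieldStrength E B μ ν = 2 * (E ⬝ᵥ E + B ⬝ᵥ B) := by
  simp only [fieldStrength, Fin.sum_univ_four, Fin.sum_univ_three, dotProduct, of_apply, cons_val',
    cons_val_zero, cons_val_one, cons_val, cons_val_fin_one, Fin.isValue]
  ring

/-- `T^{μν} = 2 F^{μα} F^ν{}_α - ½ η^{μν} F_{αβ} F^{αβ}`, indices moved with `η = diag(-1, 1, 1, 1)`. -/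
noncomputable def stressEnergy (F : Matrix (Fin 4) (Fin 4) ℝ) : Matrix (Fin 4) (Fin 4) ℝ :=
  let η : Fin 4 → ℝ := ![-1, 1, 1, 1]
  fun μ ν => 2 * (∑ α, (η μ * η α * F μ α) * (η ν * F ν α))
    - 1 / 2 * (if μ = ν then η μ else 0) * (∑ α, ∑ β, η α * η β * F α β * F α β)

lemma energyFlux_fieldStrength (E B : Fin 3 → ℝ) (w : Fin 4 → ℝ) :
    ∑ μ, ∑ ν, (![-1, 1, 1, 1] μ * ![1, 0, 0, 0] μ) * stressEnergy (fieldStrength E B) μ ν *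
        (![-1, 1, 1, 1] ν * w ν) =
      w 0 * (E ⬝ᵥ E + B ⬝ᵥ B) - 2 * (![w 1, w 2, w 3] ⬝ᵥ E ⨯₃ B) := by
  simp only [stressEnergy, fieldStrength, Fin.sum_univ_four, Fin.sum_univ_three, dotProduct, cross_apply,
    of_apply, cons_val', cons_val_zero, cons_val_one, cons_val, cons_val_fin_one, Fin.isValue, Fin.reduceEq,
    ↓reduceIte]
  ring

theorem stmt_13_general (F : Matrix (Fin 4) (Fin 4) ℝ) (hF : Fᵀ = -F)
    (s : Fin 4 → ℝ) (hs : ∀ μ, s μ = if μ = 0 then -1 else 1)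
    (v : Fin 4 → ℝ) (hv : v = ![1, 0, 0, 0])
    (E B : Fin 3 → ℝ)
    (hE : E = ![F 1 0, F 2 0, F 3 0])
    (hB : B = ![F 2 3, F 3 1, F 1 2])
    (T : Matrix (Fin 4) (Fin 4) ℝ)
    (hT : ∀ μ ν, T μ ν =
      2 * (∑ α, (s μ * s α * F μ α) * (s ν * F ν α))
        - 1 / 2 * (if μ = ν then s μ else 0) * (∑ α, ∑ β, s α * s β * F α β * F α β))
    (τ : Fin 4 → ℝ) :
    (∑ μ, ∑ ν, (s μ * v μ) * T μ ν * (s ν * v ν))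
        = (E 0 ^ 2 + E 1 ^ 2 + E 2 ^ 2) + (B 0 ^ 2 + B 1 ^ 2 + B 2 ^ 2) ∧
    ((-(∑ μ, s μ * τ μ * v μ)) - Real.sqrt (τ 1 ^ 2 + τ 2 ^ 2 + τ 3 ^ 2)) *
        ((E 0 ^ 2 + E 1 ^ 2 + E 2 ^ 2) + (B 0 ^ 2 + B 1 ^ 2 + B 2 ^ 2))
      ≤ ∑ μ, ∑ ν, (s μ * v μ) * T μ ν * (s ν * τ ν) ∧
    ((-(∑ μ, s μ * τ μ * v μ)) - Real.sqrt (τ 1 ^ 2 + τ 2 ^ 2 + τ 3 ^ 2)) *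
        ((E 0 ^ 2 + E 1 ^ 2 + E 2 ^ 2) + (B 0 ^ 2 + B 1 ^ 2 + B 2 ^ 2))
      = 1 / 2 * ((-(∑ μ, s μ * τ μ * v μ)) - Real.sqrt (τ 1 ^ 2 + τ 2 ^ 2 + τ 3 ^ 2)) *
        (∑ μ, ∑ ν, F μ ν * F μ ν) := by
  have hη : s = ![-1, 1, 1, 1] := funext fun μ => by fin_cases μ <;> simp [hs]
  obtain rfl : F = fieldStrength E B := by
    rw [hE, hB]; exact eq_fieldStrength_of_transpose_eq_neg hF
  obtain rfl : T = stressEnergy (fieldStrength E B) := by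
    ext μ ν; rw [hT, hη]; rfl
  subst hη hv
  have hτ₀ : -∑ μ, ![-1, 1, 1, 1] μ * τ μ * ![1, 0, 0, 0] μ = τ 0 := by
    simp [Fin.sum_univ_four]
  have hτsq : ![τ 1, τ 2, τ 3] ⬝ᵥ ![τ 1, τ 2, τ 3] = τ 1 ^ 2 + τ 2 ^ 2 + τ 3 ^ 2 :=
    dotProduct_self_fin_three _
  rw [energyFlux_fieldStrength, energyFlux_fieldStrength, sum_sum_fieldStrength_sq, hτ₀, ← hτsq,
    ← dotProduct_self_fin_three E, ← dotProduct_self_fin_three B]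
  refine ⟨by simp, ?_, by ring⟩
  linarith [two_mul_dotProduct_cross_le ![τ 1, τ 2, τ 3] E B]

theorem stmt_13 (F : Matrix (Fin 4) (Fin 4) ℝ) (hF : Fᵀ = -F)
    (s : Fin 4 → ℝ) (hs : ∀ μ, s μ = if μ = 0 then -1 else 1)
    (v : Fin 4 → ℝ) (hv : v = ![1, 0, 0, 0])
    (E B : Fin 3 → ℝ)
    (hE : E = ![F 1 0, F 2 0, F 3 0])
    (hB : B = ![F 2 3, F 3 1, F 1 2])
    (T : Matrix (Fin 4) (Fin 4) ℝ)
    (hT : ∀ μ ν, T μ ν =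
      2 * (∑ α, (s μ * s α * F μ α) * (s ν * F ν α))
        - 1 / 2 * (if μ = ν then s μ else 0) * (∑ α, ∑ β, s α * s β * F α β * F α β))
    (τ : Fin 4 → ℝ)
    (hτtime : (∑ μ, s μ * τ μ * τ μ) < 0)
    (hτv : (∑ μ, s μ * τ μ * v μ) < 0) :
    (∑ μ, ∑ ν, (s μ * v μ) * T μ ν * (s ν * v ν))
        = (E 0 ^ 2 + E 1 ^ 2 + E 2 ^ 2) + (B 0 ^ 2 + B 1 ^ 2 + B 2 ^ 2) ∧
    ((-(∑ μ, s μ * τ μ * v μ)) - Real.sqrt (τ 1 ^ 2 + τ 2 ^ 2 + τ 3 ^ 2)) *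
        ((E 0 ^ 2 + E 1 ^ 2 + E 2 ^ 2) + (B 0 ^ 2 + B 1 ^ 2 + B 2 ^ 2))
      ≤ ∑ μ, ∑ ν, (s μ * v μ) * T μ ν * (s ν * τ ν) ∧
    ((-(∑ μ, s μ * τ μ * v μ)) - Real.sqrt (τ 1 ^ 2 + τ 2 ^ 2 + τ 3 ^ 2)) *
        ((E 0 ^ 2 + E 1 ^ 2 + E 2 ^ 2) + (B 0 ^ 2 + B 1 ^ 2 + B 2 ^ 2))
      = 1 / 2 * ((-(∑ μ, s μ * τ μ * v μ)) - Real.sqrt (τ 1 ^ 2 + τ 2 ^ 2 + τ 3 ^ 2)) *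
        (∑ μ, ∑ ν, F μ ν * F μ ν) :=
  stmt_13_general F hF s hs v hv E B hE hB T hT τ
end

section
/- Let Pbb = diag(0,1,1,0) and Pbb₀ = diag(1,0,0,0) as 4×4 matrices. Suppose Q = −a·Pbb and Q̇ = −a'·Pbb with a ≥ q₀ > 0 and a' ∈ ℝ; suppose P = Pbb₀ P₀ Pbb − κ·p·Pbb₀ + Pbb P₁ Pbb + P₂ with P₀, P₁ arbitrary 4×4 matrices, P₂ antisymmetric, p ≥ p_c > 0, and κ > 0; and suppose (1/2)‖P₀‖_op² + ‖P₁‖_op + |s|·|a'| ≤ r for some s ∈ ℝ and r > 0. Then, choosing κ = 1/(2 p_c) and χ = r/q₀, one has ⟨Y, P Y⟩ + s ⟨Y, Q̇ Y⟩ + χ ⟨Y, Q Y⟩ ≤ 0 for all Y ∈ ℝ⁴, where ⟨·,·⟩ is the Euclidean inner product. Moreover q₀ Pbb ≤ −Q ≤ q₁ Pbb whenever q₀ ≤ a ≤ q₁ (as quadratic forms). -/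
open Matrix

/-- The operator (ℓ²→ℓ²) norm of a real 4×4 matrix. -/
noncomputable def matOpNorm (M : Matrix (Fin 4) (Fin 4) ℝ) : ℝ :=
  ‖Matrix.toEuclideanCLM (𝕜 := ℝ) M‖

private lemma dot_eq_inner (x y : Fin 4 → ℝ) :
    x ⬝ᵥ y = (inner ℝ ((WithLp.equiv 2 (Fin 4 → ℝ)).symm x)
      ((WithLp.equiv 2 (Fin 4 → ℝ)).symm y) : ℝ) := by
  simp [PiLp.inner_apply, dotProduct, mul_comm]

private lemma mulVec_norm_le (M : Matrix (Fin 4) (Fin 4) ℝ) (x : Fin 4 → ℝ) :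
    ‖(WithLp.equiv 2 (Fin 4 → ℝ)).symm (M *ᵥ x)‖ ≤
      matOpNorm M * ‖(WithLp.equiv 2 (Fin 4 → ℝ)).symm x‖ := by
  have := (Matrix.toEuclideanCLM (𝕜 := ℝ) M).le_opNorm
    ((WithLp.equiv 2 (Fin 4 → ℝ)).symm x)
  rwa [WithLp.equiv_symm_apply, Matrix.toEuclideanCLM_toLp] at this

set_option maxHeartbeats 1000000 in
theorem stmt_16 (Pbb Pbb0 : Matrix (Fin 4) (Fin 4) ℝ)
    (hPbb : Pbb = Matrix.diagonal ![(0 : ℝ), 1, 1, 0])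
    (hPbb0 : Pbb0 = Matrix.diagonal ![(1 : ℝ), 0, 0, 0])
    (a a' p pc κ r s q₀ q₁ χ : ℝ)
    (Q Qdot P P₀ P₁ P₂ : Matrix (Fin 4) (Fin 4) ℝ)
    (hQ : Q = (-a) • Pbb) (hQdot : Qdot = (-a') • Pbb)
    (hq₀ : 0 < q₀) (ha : q₀ ≤ a)
    (hP : P = Pbb0 * P₀ * Pbb - (κ * p) • Pbb0 + Pbb * P₁ * Pbb + P₂)
    (hP₂ : P₂ᵀ = -P₂)
    (hpc : 0 < pc) (hp : pc ≤ p)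
    (hr : 0 < r)
    (hnorm : 1 / 2 * matOpNorm P₀ ^ 2 + matOpNorm P₁ + |s| * |a'| ≤ r)
    (hκ : κ = 1 / (2 * pc)) (hχ : χ = r / q₀) :
    (∀ Y : Fin 4 → ℝ,
      Y ⬝ᵥ (P *ᵥ Y) + s * (Y ⬝ᵥ (Qdot *ᵥ Y)) + χ * (Y ⬝ᵥ (Q *ᵥ Y)) ≤ 0) ∧
    (a ≤ q₁ → ∀ Y : Fin 4 → ℝ,
      q₀ * (Y ⬝ᵥ (Pbb *ᵥ Y)) ≤ Y ⬝ᵥ ((-Q) *ᵥ Y) ∧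
      Y ⬝ᵥ ((-Q) *ᵥ Y) ≤ q₁ * (Y ⬝ᵥ (Pbb *ᵥ Y))) := by
  have hPbbT : Pbbᵀ = Pbb := by rw [hPbb, Matrix.diagonal_transpose]
  have hPbb0T : Pbb0ᵀ = Pbb0 := by rw [hPbb0, Matrix.diagonal_transpose]
  constructor
  · intro Y
    set u : Fin 4 → ℝ := Pbb *ᵥ Y with hu
    set w : Fin 4 → ℝ := Pbb0 *ᵥ Y with hw
    -- basic coordinate computations
    have hPbbq : Y ⬝ᵥ (Pbb *ᵥ Y) = (Y 1) ^ 2 + (Y 2) ^ 2 := by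
      simp [hPbb, dotProduct, Matrix.mulVec_diagonal, Fin.sum_univ_four]
      ring
    have huu : u ⬝ᵥ u = (Y 1) ^ 2 + (Y 2) ^ 2 := by
      simp [hu, hPbb, dotProduct, Matrix.mulVec_diagonal, Fin.sum_univ_four]
      ring
    have hww : w ⬝ᵥ w = (Y 0) ^ 2 := by
      simp [hw, hPbb0, dotProduct, Matrix.mulVec_diagonal, Fin.sum_univ_four]
      ring
    have hPbb0q : Y ⬝ᵥ (Pbb0 *ᵥ Y) = (Y 0) ^ 2 := by
      simp [hPbb0, dotProduct, Matrix.mulVec_diagonal, Fin.sum_univ_four]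
      ring
    -- norms
    set V : ℝ := ‖(WithLp.equiv 2 (Fin 4 → ℝ)).symm u‖ with hV
    set W : ℝ := ‖(WithLp.equiv 2 (Fin 4 → ℝ)).symm w‖ with hW
    have hV0 : 0 ≤ V := norm_nonneg _
    have hW0 : 0 ≤ W := norm_nonneg _
    have hV2 : V ^ 2 = (Y 1) ^ 2 + (Y 2) ^ 2 := by
      rw [hV, ← real_inner_self_eq_norm_sq, ← dot_eq_inner, huu]
    have hW2 : W ^ 2 = (Y 0) ^ 2 := by
      rw [hW, ← real_inner_self_eq_norm_sq, ← dot_eq_inner, hww]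
    -- term 1
    have hvmPbb0' : Y ᵥ* Pbb0 = w := by
      rw [hw, ← Matrix.vecMul_transpose, hPbb0T]
    have t1 : Y ⬝ᵥ ((Pbb0 * P₀ * Pbb) *ᵥ Y) = w ⬝ᵥ (P₀ *ᵥ u) := by
      rw [← Matrix.mulVec_mulVec, ← Matrix.mulVec_mulVec,
        Matrix.dotProduct_mulVec Y Pbb0, hvmPbb0', hu]
    have b1 : w ⬝ᵥ (P₀ *ᵥ u) ≤ matOpNorm P₀ * (W * V) := by
      rw [dot_eq_inner]
      calc (inner ℝ ((WithLp.equiv 2 (Fin 4 → ℝ)).symm w)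
            ((WithLp.equiv 2 (Fin 4 → ℝ)).symm (P₀ *ᵥ u)) : ℝ)
          ≤ ‖(WithLp.equiv 2 (Fin 4 → ℝ)).symm w‖ *
            ‖(WithLp.equiv 2 (Fin 4 → ℝ)).symm (P₀ *ᵥ u)‖ := real_inner_le_norm _ _
        _ ≤ W * (matOpNorm P₀ * V) := by
            exact mul_le_mul_of_nonneg_left (mulVec_norm_le P₀ u) hW0
        _ = matOpNorm P₀ * (W * V) := by ring
    -- term 2
    have hvmPbb : Y ᵥ* Pbb = u := by
      rw [hu, ← Matrix.vecMul_transpose, hPbbT]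
    have hvmPbb0 : Y ᵥ* Pbb0 = w := by
      rw [hw, ← Matrix.vecMul_transpose, hPbb0T]
    have t2 : Y ⬝ᵥ ((Pbb * P₁ * Pbb) *ᵥ Y) = u ⬝ᵥ (P₁ *ᵥ u) := by
      rw [← Matrix.mulVec_mulVec, ← Matrix.mulVec_mulVec,
        Matrix.dotProduct_mulVec Y Pbb, hvmPbb, hu]
    have b2 : u ⬝ᵥ (P₁ *ᵥ u) ≤ matOpNorm P₁ * V ^ 2 := by
      rw [dot_eq_inner]
      calc (inner ℝ ((WithLp.equiv 2 (Fin 4 → ℝ)).symm u)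
            ((WithLp.equiv 2 (Fin 4 → ℝ)).symm (P₁ *ᵥ u)) : ℝ)
          ≤ ‖(WithLp.equiv 2 (Fin 4 → ℝ)).symm u‖ *
            ‖(WithLp.equiv 2 (Fin 4 → ℝ)).symm (P₁ *ᵥ u)‖ := real_inner_le_norm _ _
        _ ≤ V * (matOpNorm P₁ * V) := mul_le_mul_of_nonneg_left (mulVec_norm_le P₁ u) hV0
        _ = matOpNorm P₁ * V ^ 2 := by ring
    -- antisymmetric term vanishes
    have t3 : Y ⬝ᵥ (P₂ *ᵥ Y) = 0 := by
      have h1 : Y ⬝ᵥ (P₂ *ᵥ Y) = -(Y ⬝ᵥ (P₂ *ᵥ Y)) := by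
        calc Y ⬝ᵥ (P₂ *ᵥ Y) = (P₂ᵀ *ᵥ Y) ⬝ᵥ Y := by
              rw [Matrix.dotProduct_mulVec, Matrix.mulVec_transpose]
          _ = -((P₂ *ᵥ Y) ⬝ᵥ Y) := by
              rw [hP₂, Matrix.neg_mulVec, neg_dotProduct]
          _ = -(Y ⬝ᵥ (P₂ *ᵥ Y)) := by rw [dotProduct_comm]
      linarith
    -- expand everything
    have hexp : Y ⬝ᵥ (P *ᵥ Y) + s * (Y ⬝ᵥ (Qdot *ᵥ Y)) + χ * (Y ⬝ᵥ (Q *ᵥ Y)) =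
        w ⬝ᵥ (P₀ *ᵥ u) - κ * p * (Y 0) ^ 2 + u ⬝ᵥ (P₁ *ᵥ u)
          + s * (-a') * ((Y 1) ^ 2 + (Y 2) ^ 2) + χ * (-a) * ((Y 1) ^ 2 + (Y 2) ^ 2) := by
      rw [hP, hQ, hQdot]
      simp only [Matrix.add_mulVec, Matrix.sub_mulVec, Matrix.smul_mulVec,
        dotProduct_add, dotProduct_sub, dotProduct_smul,
        smul_eq_mul, t1, t2, t3, hPbbq, hPbb0q]
      ring
    rw [hexp, ← hV2, ← hW2]
    -- auxiliary inequalities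
    have hκp : 1 / 2 ≤ κ * p := by
      rw [hκ]
      rw [div_mul_eq_mul_div, one_mul, le_div_iff₀ (by positivity)]
      nlinarith
    have hχ0 : 0 ≤ χ := by rw [hχ]; positivity
    have hχq : χ * q₀ = r := by rw [hχ]; field_simp
    have hχa : r ≤ χ * a := by nlinarith [mul_le_mul_of_nonneg_left ha hχ0]
    have hsa : s * (-a') ≤ |s| * |a'| := by
      calc s * (-a') ≤ |s * (-a')| := le_abs_self _
        _ = |s| * |a'| := by rw [abs_mul, abs_neg]
    have hN0 : 0 ≤ matOpNorm P₀ := norm_nonneg _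
    have young : matOpNorm P₀ * (W * V) ≤
        1 / 2 * matOpNorm P₀ ^ 2 * V ^ 2 + 1 / 2 * W ^ 2 := by
      nlinarith [sq_nonneg (matOpNorm P₀ * V - W)]
    have hVsq : 0 ≤ V ^ 2 := sq_nonneg V
    nlinarith [b1, b2, young,
      mul_le_mul_of_nonneg_right hsa hVsq,
      mul_le_mul_of_nonneg_right hχa hVsq,
      mul_le_mul_of_nonneg_right hnorm hVsq,
      mul_le_mul_of_nonneg_right hκp (sq_nonneg W)]
  · intro hq₁ Y
    have hPbbq : Y ⬝ᵥ (Pbb *ᵥ Y) = (Y 1) ^ 2 + (Y 2) ^ 2 := by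
      simp [hPbb, dotProduct, Matrix.mulVec_diagonal, Fin.sum_univ_four]
      ring
    have hQq : Y ⬝ᵥ ((-Q) *ᵥ Y) = a * ((Y 1) ^ 2 + (Y 2) ^ 2) := by
      rw [hQ, neg_smul, neg_neg, Matrix.smul_mulVec, dotProduct_smul,
        smul_eq_mul, hPbbq]
    rw [hPbbq, hQq]
    constructor
    · nlinarith [sq_nonneg (Y 1), sq_nonneg (Y 2)]
    · nlinarith [sq_nonneg (Y 1), sq_nonneg (Y 2)]
end
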